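/- arXiv:math/0403341 — 3 statements merged into one kernel-verified Lean document; each statement's English description precedes it below -/
import Mathlib

section
/- The color Hecke R-matrix R satisfies the quantum Yang–Baxter equation in braid form: R₁₂ ∘ R₂₃ ∘ R₁₂ = R₂₃ ∘ R₁₂ ∘ R₂₃ as linear operators on V⊗V⊗V. -/
/-!
Both sides are linear, so it suffices to compare them on basis vectors `e a ⊗ e b ⊗ e c`.
There `R` only permutes tensor factors, up to scalars, and adds a multiple `q - q⁻¹` of the
identity on increasing pairs, so both sides are combinations of the permutations of
`e a ⊗ e b ⊗ e c` and only the relative order of `a, b, c` matters. In each of the thirteen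
configurations the coefficients agree once one uses `ε α β * ε β α = 1` for distinct
indices and, when two indices coincide, the Hecke relation `d ^ 2 = (q - q⁻¹) * d + 1`
satisfied by both possible diagonal values `d = q` and `d = -q⁻¹`.
-/

open TensorProduct

namespace ColorHecke

variable {K : Type*} [CommRing K]

section Operators

variable {V : Type*} [AddCommGroup V] [Module K V]

/-- `T₂₃ = id ⊗ T`, acting on `(V ⊗ V) ⊗ V` through the associator. -/
def onRightPair (T : V ⊗[K] V →ₗ[K] V ⊗[K] V) : (V ⊗[K] V) ⊗[K] V →ₗ[K] (V ⊗[K] V) ⊗[K] V :=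
  (TensorProduct.assoc K V V V).symm.toLinearMap ∘ₗ T.lTensor V ∘ₗ
    (TensorProduct.assoc K V V V).toLinearMap

theorem onRightPair_tmul (T : V ⊗[K] V →ₗ[K] V ⊗[K] V) (x y z : V) :
    onRightPair T ((x ⊗ₜ y) ⊗ₜ z) = (TensorProduct.assoc K V V V).symm (x ⊗ₜ T (y ⊗ₜ z)) := by
  simp [onRightPair]

end Operators

theorem hecke_diagonal_sq {F : Type*} [Field F] {q : F} (hq : q ≠ 0) {n : ℕ}
    (hn : n = 0 ∨ n = 1) :
    (q ^ (1 - 2 * (n : ℤ)) * (-1) ^ n) ^ 2 =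
      (q - q⁻¹) * (q ^ (1 - 2 * (n : ℤ)) * (-1) ^ n) + 1 := by
  rcases hn with rfl | rfl <;> norm_num <;> field_simp <;> ring

variable {J : Type*} [LinearOrder J]

section Hecke

variable (z : K) (t : J → J → K) (d : J → K)
  (R : (J →₀ K) ⊗[K] (J →₀ K) →ₗ[K] (J →₀ K) ⊗[K] (J →₀ K))
  (hR_lt : ∀ a b, a < b → R (Finsupp.single a 1 ⊗ₜ Finsupp.single b 1) =
    z • (Finsupp.single a 1 ⊗ₜ Finsupp.single b 1) +
      t a b • (Finsupp.single b 1 ⊗ₜ Finsupp.single a 1))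
  (hR_eq : ∀ a, R (Finsupp.single a 1 ⊗ₜ Finsupp.single a 1) =
    d a • (Finsupp.single a 1 ⊗ₜ Finsupp.single a 1))
  (hR_gt : ∀ a b, b < a → R (Finsupp.single a 1 ⊗ₜ Finsupp.single b 1) =
    t a b • (Finsupp.single b 1 ⊗ₜ Finsupp.single a 1))
  (ht : ∀ a b, a < b → t a b * t b a = 1) (hd : ∀ a, d a ^ 2 = z * d a + 1)
include hR_lt hR_eq hR_gt ht hd

theorem braid_apply_single (a b c : J) :
    (R.rTensor _ ∘ₗ onRightPair R ∘ₗ R.rTensor _)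
        ((Finsupp.single a 1 ⊗ₜ Finsupp.single b 1) ⊗ₜ Finsupp.single c 1) =
      (onRightPair R ∘ₗ R.rTensor _ ∘ₗ onRightPair R)
        ((Finsupp.single a 1 ⊗ₜ Finsupp.single b 1) ⊗ₜ Finsupp.single c 1) := by
  rcases lt_trichotomy a b with hab | hab | hab <;>
  rcases lt_trichotomy b c with hbc | hbc | hbc <;>
  rcases lt_trichotomy a c with hac | hac | hac
  all_goals try (exfalso; order)
  -- rewriting with the equalities among `a, b, c` merges coinciding basis tensors, so that
  -- comparing coefficients afterwards is exact
  all_goals simp only [hab, hbc, hac, LinearMap.comp_apply, LinearMap.rTensor_tmul,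
      onRightPair_tmul, hR_lt, hR_eq, hR_gt, map_add, map_smul, tmul_add, add_tmul, tmul_smul,
      ← smul_tmul', assoc_symm_tmul, smul_add, smul_smul]
  all_goals match_scalars <;> first | ring1 | grind

theorem braid_of_hecke :
    R.rTensor _ ∘ₗ onRightPair R ∘ₗ R.rTensor _ =
      onRightPair R ∘ₗ R.rTensor _ ∘ₗ onRightPair R := by
  ext a b c
  exact braid_apply_single z t d R hR_lt hR_eq hR_gt ht hd a b c

end Hecke

end ColorHecke

theorem colorHecke_yangBaxter_general
    {Γ : Type*} (ε : Γ → Γ → ℂ)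
    (hε1 : ∀ α β, ε α β * ε β α = 1)
    (π : Γ → ℕ)
    (hπ01 : ∀ α, π α = 0 ∨ π α = 1)
    {J : Type*} [LinearOrder J] (p : J → Γ)
    (q : ℂ) (hq : q ≠ 0)
    (R : ((J →₀ ℂ) ⊗[ℂ] (J →₀ ℂ)) →ₗ[ℂ] ((J →₀ ℂ) ⊗[ℂ] (J →₀ ℂ)))
    (hRdiag : ∀ a : J,
      R (Finsupp.single a (1 : ℂ) ⊗ₜ[ℂ] Finsupp.single a (1 : ℂ)) =
        (q ^ ((1 : ℤ) - 2 * (π (p a) : ℤ)) * (-1 : ℂ) ^ (π (p a))) •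
          (Finsupp.single a (1 : ℂ) ⊗ₜ[ℂ] Finsupp.single a (1 : ℂ)))
    (hRlt : ∀ a b : J, a < b →
      R (Finsupp.single a (1 : ℂ) ⊗ₜ[ℂ] Finsupp.single b (1 : ℂ)) =
        (q - q⁻¹) • (Finsupp.single a (1 : ℂ) ⊗ₜ[ℂ] Finsupp.single b (1 : ℂ)) +
          ε (p a) (p b) • (Finsupp.single b (1 : ℂ) ⊗ₜ[ℂ] Finsupp.single a (1 : ℂ)))
    (hRgt : ∀ a b : J, b < a →
      R (Finsupp.single a (1 : ℂ) ⊗ₜ[ℂ] Finsupp.single b (1 : ℂ)) =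
        ε (p a) (p b) • (Finsupp.single b (1 : ℂ) ⊗ₜ[ℂ] Finsupp.single a (1 : ℂ))) :
    (TensorProduct.map R LinearMap.id) ∘ₗ
      ((TensorProduct.assoc ℂ (J →₀ ℂ) (J →₀ ℂ) (J →₀ ℂ)).symm.toLinearMap ∘ₗ
        TensorProduct.map LinearMap.id R ∘ₗ
        (TensorProduct.assoc ℂ (J →₀ ℂ) (J →₀ ℂ) (J →₀ ℂ)).toLinearMap) ∘ₗ
      (TensorProduct.map R LinearMap.id) =
    ((TensorProduct.assoc ℂ (J →₀ ℂ) (J →₀ ℂ) (J →₀ ℂ)).symm.toLinearMap ∘ₗ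
        TensorProduct.map LinearMap.id R ∘ₗ
        (TensorProduct.assoc ℂ (J →₀ ℂ) (J →₀ ℂ) (J →₀ ℂ)).toLinearMap) ∘ₗ
      (TensorProduct.map R LinearMap.id) ∘ₗ
      ((TensorProduct.assoc ℂ (J →₀ ℂ) (J →₀ ℂ) (J →₀ ℂ)).symm.toLinearMap ∘ₗ
        TensorProduct.map LinearMap.id R ∘ₗ
        (TensorProduct.assoc ℂ (J →₀ ℂ) (J →₀ ℂ) (J →₀ ℂ)).toLinearMap) :=
  ColorHecke.braid_of_hecke (q - q⁻¹) (fun a b => ε (p a) (p b))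
    (fun a => q ^ ((1 : ℤ) - 2 * (π (p a) : ℤ)) * (-1 : ℂ) ^ (π (p a))) R hRlt hRdiag hRgt
    (fun a b _ => hε1 (p a) (p b)) (fun a => ColorHecke.hecke_diagonal_sq hq (hπ01 (p a)))

/-- The color Hecke R-matrix satisfies the quantum Yang–Baxter equation
in braid form `R₁₂ ∘ R₂₃ ∘ R₁₂ = R₂₃ ∘ R₁₂ ∘ R₂₃` on `V ⊗ V ⊗ V`, where `V = J →₀ ℂ`
is the free complex vector space on a linearly ordered index set `J` graded by
`p : J → Γ`, `ε` is a commutation factor on `Γ` with parity function `π`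
(`ε α α = (-1) ^ π α`, `π α ∈ {0, 1}`), `q` is a nonzero complex number, and `R` is
determined on basis vectors `e a = Finsupp.single a 1` by:
`R (e a ⊗ e a) = (q ^ (1 - 2 π (p a)) * (-1) ^ π (p a)) • (e a ⊗ e a)`,
`R (e a ⊗ e b) = (q - q⁻¹) • (e a ⊗ e b) + ε (p a) (p b) • (e b ⊗ e a)` for `a < b`,
`R (e a ⊗ e b) = ε (p a) (p b) • (e b ⊗ e a)` for `a > b`. -/
theorem colorHecke_yangBaxter
    {Γ : Type*} [AddCommGroup Γ] (ε : Γ → Γ → ℂ)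
    (hε0 : ∀ α β, ε α β ≠ 0)
    (hε1 : ∀ α β, ε α β * ε β α = 1)
    (hε2 : ∀ α β γ, ε (α + β) γ = ε α γ * ε β γ)
    (π : Γ → ℕ)
    (hπ01 : ∀ α, π α = 0 ∨ π α = 1)
    (hπ : ∀ α, ε α α = (-1 : ℂ) ^ (π α))
    {J : Type*} [LinearOrder J] (p : J → Γ)
    (q : ℂ) (hq : q ≠ 0)
    (R : ((J →₀ ℂ) ⊗[ℂ] (J →₀ ℂ)) →ₗ[ℂ] ((J →₀ ℂ) ⊗[ℂ] (J →₀ ℂ)))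
    (hRdiag : ∀ a : J,
      R (Finsupp.single a (1 : ℂ) ⊗ₜ[ℂ] Finsupp.single a (1 : ℂ)) =
        (q ^ ((1 : ℤ) - 2 * (π (p a) : ℤ)) * (-1 : ℂ) ^ (π (p a))) •
          (Finsupp.single a (1 : ℂ) ⊗ₜ[ℂ] Finsupp.single a (1 : ℂ)))
    (hRlt : ∀ a b : J, a < b →
      R (Finsupp.single a (1 : ℂ) ⊗ₜ[ℂ] Finsupp.single b (1 : ℂ)) =
        (q - q⁻¹) • (Finsupp.single a (1 : ℂ) ⊗ₜ[ℂ] Finsupp.single b (1 : ℂ)) +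
          ε (p a) (p b) • (Finsupp.single b (1 : ℂ) ⊗ₜ[ℂ] Finsupp.single a (1 : ℂ)))
    (hRgt : ∀ a b : J, b < a →
      R (Finsupp.single a (1 : ℂ) ⊗ₜ[ℂ] Finsupp.single b (1 : ℂ)) =
        ε (p a) (p b) • (Finsupp.single b (1 : ℂ) ⊗ₜ[ℂ] Finsupp.single a (1 : ℂ))) :
    (TensorProduct.map R LinearMap.id) ∘ₗ
      ((TensorProduct.assoc ℂ (J →₀ ℂ) (J →₀ ℂ) (J →₀ ℂ)).symm.toLinearMap ∘ₗ
        TensorProduct.map LinearMap.id R ∘ₗ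
        (TensorProduct.assoc ℂ (J →₀ ℂ) (J →₀ ℂ) (J →₀ ℂ)).toLinearMap) ∘ₗ
      (TensorProduct.map R LinearMap.id) =
    ((TensorProduct.assoc ℂ (J →₀ ℂ) (J →₀ ℂ) (J →₀ ℂ)).symm.toLinearMap ∘ₗ
        TensorProduct.map LinearMap.id R ∘ₗ
        (TensorProduct.assoc ℂ (J →₀ ℂ) (J →₀ ℂ) (J →₀ ℂ)).toLinearMap) ∘ₗ
      (TensorProduct.map R LinearMap.id) ∘ₗ
      ((TensorProduct.assoc ℂ (J →₀ ℂ) (J →₀ ℂ) (J →₀ ℂ)).symm.toLinearMap ∘ₗ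
        TensorProduct.map LinearMap.id R ∘ₗ
        (TensorProduct.assoc ℂ (J →₀ ℂ) (J →₀ ℂ) (J →₀ ℂ)).toLinearMap) :=
  colorHecke_yangBaxter_general ε hε1 π hπ01 p q hq R hRdiag hRlt hRgt
end

section
/- The color Hecke R-matrix R satisfies the Hecke condition: R ∘ R = id + (q−q⁻¹)·R as linear operators on V⊗V. -/
open TensorProduct

/-- The color Hecke R-matrix satisfies the Hecke condition
`R ∘ R = id + (q - q⁻¹) • R` on `V ⊗ V`, where `V = J →₀ ℂ` is the free complex
vector space on a linearly ordered index set `J` graded by `p : J → Γ`, `ε` is a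
commutation factor on `Γ` with parity function `π` (`ε α α = (-1) ^ π α`,
`π α ∈ {0, 1}`), `q` is a nonzero complex number, and `R` is determined on basis
vectors `e a = Finsupp.single a 1` by:
`R (e a ⊗ e a) = (q ^ (1 - 2 π (p a)) * (-1) ^ π (p a)) • (e a ⊗ e a)`,
`R (e a ⊗ e b) = (q - q⁻¹) • (e a ⊗ e b) + ε (p a) (p b) • (e b ⊗ e a)` for `a < b`,
`R (e a ⊗ e b) = ε (p a) (p b) • (e b ⊗ e a)` for `a > b`. -/
theorem colorHecke_heckeCondition
    {Γ : Type*} [AddCommGroup Γ] (ε : Γ → Γ → ℂ)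
    (hε0 : ∀ α β, ε α β ≠ 0)
    (hε1 : ∀ α β, ε α β * ε β α = 1)
    (hε2 : ∀ α β γ, ε (α + β) γ = ε α γ * ε β γ)
    (π : Γ → ℕ)
    (hπ01 : ∀ α, π α = 0 ∨ π α = 1)
    (hπ : ∀ α, ε α α = (-1 : ℂ) ^ (π α))
    {J : Type*} [LinearOrder J] (p : J → Γ)
    (q : ℂ) (hq : q ≠ 0)
    (R : ((J →₀ ℂ) ⊗[ℂ] (J →₀ ℂ)) →ₗ[ℂ] ((J →₀ ℂ) ⊗[ℂ] (J →₀ ℂ)))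
    (hRdiag : ∀ a : J,
      R (Finsupp.single a (1 : ℂ) ⊗ₜ[ℂ] Finsupp.single a (1 : ℂ)) =
        (q ^ ((1 : ℤ) - 2 * (π (p a) : ℤ)) * (-1 : ℂ) ^ (π (p a))) •
          (Finsupp.single a (1 : ℂ) ⊗ₜ[ℂ] Finsupp.single a (1 : ℂ)))
    (hRlt : ∀ a b : J, a < b →
      R (Finsupp.single a (1 : ℂ) ⊗ₜ[ℂ] Finsupp.single b (1 : ℂ)) =
        (q - q⁻¹) • (Finsupp.single a (1 : ℂ) ⊗ₜ[ℂ] Finsupp.single b (1 : ℂ)) +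
          ε (p a) (p b) • (Finsupp.single b (1 : ℂ) ⊗ₜ[ℂ] Finsupp.single a (1 : ℂ)))
    (hRgt : ∀ a b : J, b < a →
      R (Finsupp.single a (1 : ℂ) ⊗ₜ[ℂ] Finsupp.single b (1 : ℂ)) =
        ε (p a) (p b) • (Finsupp.single b (1 : ℂ) ⊗ₜ[ℂ] Finsupp.single a (1 : ℂ))) :
    R ∘ₗ R = LinearMap.id + (q - q⁻¹) • R := by
  have key : ∀ a b : J, R (R (Finsupp.single a (1:ℂ) ⊗ₜ[ℂ] Finsupp.single b 1)) =
      (Finsupp.single a (1:ℂ) ⊗ₜ[ℂ] Finsupp.single b 1) +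
        (q - q⁻¹) • R (Finsupp.single a (1:ℂ) ⊗ₜ[ℂ] Finsupp.single b 1) := by
    intro a b
    rcases lt_trichotomy a b with h | h | h
    · rw [hRlt a b h, map_add, map_smul, map_smul, hRlt a b h, hRgt b a h,
        smul_smul, hε1, smul_add, smul_smul, smul_smul, one_smul]
      module
    · subst h
      rw [hRdiag a, map_smul, hRdiag a, smul_smul, smul_smul]
      have haux : ∀ (s t : ℂ) (x : (J →₀ ℂ) ⊗[ℂ] (J →₀ ℂ)), s = 1 + t → s • x = x + t • x := by
        intro s t x hst; rw [hst, add_smul, one_smul]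
      apply haux
      rcases hπ01 (p a) with hp | hp <;> rw [hp] <;> simp <;> field_simp <;> ring
    · rw [hRgt a b h, map_smul, hRlt b a h, smul_add, smul_smul, smul_smul, hε1, one_smul]
      module
  ext a b
  simp only [LinearMap.comp_apply, LinearMap.add_apply, LinearMap.id_apply,
    LinearMap.smul_apply, TensorProduct.AlgebraTensorModule.curry_apply,
    TensorProduct.curry_apply, LinearMap.coe_restrictScalars]
  exact key a b
end

section
/- Let σ : Γ × Γ → ℂ \ {0} be a 2-cocycle on an additive abelian group Γ, i.e. σ(α,β)·σ(α+β,γ) = σ(β,γ)·σ(α,β+γ) for all α,β,γ, and let π : Γ → ℤ/2ℤ be a group homomorphism. Then the map ε(α,β) := (−1)^{π(α)·π(β)} · σ(α,β)·σ(β,α)⁻¹ is a commutation factor on Γ. -/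
/-- If `σ` is a (nowhere-vanishing, `ℂ`-valued) 2-cocycle on an
additive abelian group `Γ`, i.e. `σ α β * σ (α+β) γ = σ β γ * σ α (β+γ)`, and
`π : Γ → ℤ/2ℤ` is a group homomorphism, then
`ε α β = (-1)^{π α · π β} · σ α β · (σ β α)⁻¹` (where `(-1)^{π α · π β}` is `-1`
if `π α = π β = 1` and `1` otherwise) is a commutation factor on `Γ`. -/
theorem cocycle_parity_commutationFactor
    {Γ : Type*} [AddCommGroup Γ]
    (σ : Γ → Γ → ℂ) (hσ0 : ∀ α β, σ α β ≠ 0)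
    (hσ : ∀ α β γ, σ α β * σ (α + β) γ = σ β γ * σ α (β + γ))
    (π : Γ →+ ZMod 2)
    (ε : Γ → Γ → ℂ)
    (hε : ∀ α β, ε α β =
      (if π α = 1 ∧ π β = 1 then (-1 : ℂ) else 1) * σ α β * (σ β α)⁻¹) :
    (∀ α β, ε α β ≠ 0) ∧
    (∀ α β, ε α β * ε β α = 1) ∧
    (∀ α β γ, ε (α + β) γ = ε α γ * ε β γ) := by
  have hz : ∀ a : ZMod 2, a = 0 ∨ a = 1 := by decide
  refine ⟨?_, ?_, ?_⟩
  · intro α β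
    rw [hε]
    have h1 := hσ0 α β
    have h2 := hσ0 β α
    split <;> simp_all
  · intro α β
    rw [hε, hε]
    have h1 := hσ0 α β
    have h2 := hσ0 β α
    have hsym : (if π α = 1 ∧ π β = 1 then (-1 : ℂ) else 1)
        = (if π β = 1 ∧ π α = 1 then (-1 : ℂ) else 1) := by
      rcases hz (π α) with h | h <;> rcases hz (π β) with h' | h' <;> simp [h, h']
    rw [hsym]
    split <;> field_simp <;> ring
  · intro α β γ
    rw [hε, hε, hε, map_add]
    have hsgn : (if π α + π β = 1 ∧ π γ = 1 then (-1 : ℂ) else 1)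
        = (if π α = 1 ∧ π γ = 1 then (-1 : ℂ) else 1)
          * (if π β = 1 ∧ π γ = 1 then (-1 : ℂ) else 1) := by
      rcases hz (π α) with h | h <;> rcases hz (π β) with h' | h' <;>
        rcases hz (π γ) with h'' | h'' <;> simp [h, h', h''] <;> norm_num
    rw [hsgn]
    have key : σ (α + β) γ * (σ γ (α + β))⁻¹
        = (σ α γ * (σ γ α)⁻¹) * (σ β γ * (σ γ β)⁻¹) := by
      have h1 := hσ α β γ
      have h2 := hσ γ α β
      have h3 := hσ α γ β
      rw [add_comm γ α] at h2
      rw [add_comm γ β] at h3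
      have e1 := hσ0 γ (α + β)
      have e2 := hσ0 γ α
      have e3 := hσ0 γ β
      have e4 := hσ0 α β
      have haux : σ α β * (σ (α + β) γ * σ γ α * σ γ β)
          = σ α β * (σ α γ * σ β γ * σ γ (α + β)) := by
        linear_combination (σ γ α * σ γ β) * h1 - (σ γ α * σ β γ) * h3
          + (σ α γ * σ β γ) * h2
      have hc := mul_left_cancel₀ e4 haux
      field_simp
      linear_combination hc
    calc _ = (if π α = 1 ∧ π γ = 1 then (-1 : ℂ) else 1)
            * (if π β = 1 ∧ π γ = 1 then (-1 : ℂ) else 1)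
            * (σ (α + β) γ * (σ γ (α + β))⁻¹) := by ring
      _ = _ := by rw [key]; ring
end
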